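/- Fix ε ∈ (0,1) and c > 0, and let t0 < t1 with τ := t1 − t0 satisfying cτ < ε·R_min² and τ·√‖(R²)''‖ < 2√(1+√(1−ε²))·R_min. Then 2·A(t0,t1) > ‖(R²)''‖; in particular, since the Dirichlet solution r satisfies (r²)''(t) ≡ 2A(t0,t1), the function t ↦ R(t)² − r(t)² is strictly concave on [t0,t1], and hence (vanishing at both endpoints) is strictly positive on (t0,t1). -/

import Mathlib

noncomputable section

/-- Sup-norm of a function (for a continuous 1-periodic function this is the maximum of `|f|`). -/
def supNorm (f : ℝ → ℝ) : ℝ := sSup (Set.range fun t => |f t|)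

/-- Minimum value of `R` (attained for a continuous 1-periodic `R`). -/
def Rmin (R : ℝ → ℝ) : ℝ := sInf (Set.range R)

/-- Maximum value of `R` (attained for a continuous 1-periodic `R`). -/
def Rmax (R : ℝ → ℝ) : ℝ := sSup (Set.range R)

/-- The constant `σ = min { R_min/(2‖R'‖) , 2√(1+√(1−ε²))·R_min/√‖(R²)''‖ }`. -/
def sigmaR (R : ℝ → ℝ) (ε : ℝ) : ℝ :=
  min (Rmin R / (2 * supNorm (deriv R)))
    (2 * Real.sqrt (1 + Real.sqrt (1 - ε ^ 2)) * Rmin R /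
      Real.sqrt (supNorm (deriv (deriv (fun t => R t ^ 2)))))

/-- `√(R(t0)²R(t1)² − c²(t1−t0)²)`. -/
def Ssq (R : ℝ → ℝ) (c t0 t1 : ℝ) : ℝ :=
  Real.sqrt (R t0 ^ 2 * R t1 ^ 2 - c ^ 2 * (t1 - t0) ^ 2)

/-- `A(t0,t1) = (R(t0)² + R(t1)² + 2√(R(t0)²R(t1)² − c²(t1−t0)²))/(t1−t0)²`. -/
def Afun (R : ℝ → ℝ) (c t0 t1 : ℝ) : ℝ :=
  (R t0 ^ 2 + R t1 ^ 2 + 2 * Ssq R c t0 t1) / (t1 - t0) ^ 2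

/-- `B = −( t0 + (R(t0)² + √(R(t0)²R(t1)² − c²(t1−t0)²))/((t1−t0)·A) )`. -/
def Bfun (R : ℝ → ℝ) (c t0 t1 : ℝ) : ℝ :=
  -(t0 + (R t0 ^ 2 + Ssq R c t0 t1) / ((t1 - t0) * Afun R c t0 t1))

/-- The Dirichlet solution `r(t) = √((A²(t+B)² + c²)/A)`. -/
def dirich (R : ℝ → ℝ) (c t0 t1 t : ℝ) : ℝ :=
  Real.sqrt ((Afun R c t0 t1 ^ 2 * (t + Bfun R c t0 t1) ^ 2 + c ^ 2) / Afun R c t0 t1)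

/-- The generating function
`h(t0,t1) = ½(t1−t0)·A(t0,t1) + c·arctan( c(t1−t0)/√(R(t0)²R(t1)² − c²(t1−t0)²) )`. -/
def hgen (R : ℝ → ℝ) (c t0 t1 : ℝ) : ℝ :=
  (1 / 2) * (t1 - t0) * Afun R c t0 t1 +
    c * Real.arctan (c * (t1 - t0) / Ssq R c t0 t1)

/-- `∂₁h`, the partial derivative of `h` in its first argument. -/
def d1h (R : ℝ → ℝ) (c t0 t1 : ℝ) : ℝ := deriv (fun s => hgen R c s t1) t0

/-- `∂₂h`, the partial derivative of `h` in its second argument. -/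
def d2h (R : ℝ → ℝ) (c t0 t1 : ℝ) : ℝ := deriv (fun s => hgen R c t0 s) t1

/-- `∂₁₂h`, the mixed second partial derivative of `h`. -/
def d12h (R : ℝ → ℝ) (c t0 t1 : ℝ) : ℝ := deriv (fun s => d1h R c t0 s) t1

lemma per_range_eq {f : ℝ → ℝ} (hp : ∀ t, f (t + 1) = f t) :
    Set.range f = f '' Set.Icc 0 1 := by
  apply Set.Subset.antisymm
  · rintro _ ⟨t, rfl⟩
    refine ⟨Int.fract t, ⟨Int.fract_nonneg t, (Int.fract_lt_one t).le⟩, ?_⟩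
    have hper : Function.Periodic f 1 := hp
    have h2 := hper.sub_int_mul_eq (x := t) ⌊t⌋
    rw [Int.fract]
    rw [mul_one] at h2
    exact h2
  · rintro _ ⟨t, _, rfl⟩; exact ⟨t, rfl⟩

lemma per_bddAbove {f : ℝ → ℝ} (hc : Continuous f) (hp : ∀ t, f (t + 1) = f t) :
    BddAbove (Set.range f) := by
  rw [per_range_eq hp]
  exact (isCompact_Icc.image hc).bddAbove

lemma per_bddBelow {f : ℝ → ℝ} (hc : Continuous f) (hp : ∀ t, f (t + 1) = f t) :
    BddBelow (Set.range f) := by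
  rw [per_range_eq hp]
  exact (isCompact_Icc.image hc).bddBelow

set_option maxHeartbeats 4000000 in
/-- If `cτ < ε R_min²` and `τ·√‖(R²)''‖ < 2√(1+√(1−ε²))·R_min`
(with `τ = t1 − t0 > 0`), then `2A(t0,t1) > ‖(R²)''‖`; in particular, since the Dirichlet
solution satisfies `(r²)'' ≡ 2A(t0,t1)`, the function `t ↦ R(t)² − r(t)²` is strictly concave
on `[t0,t1]` and hence, vanishing at the endpoints, strictly positive on `(t0,t1)`. -/
theorem confinement_by_concavity (R : ℝ → ℝ) (ε c t0 t1 : ℝ)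
    (hC : ContDiff ℝ 2 R) (hper : ∀ t, R (t + 1) = R t) (hpos : ∀ t, 0 < R t)
    (hnc : ∃ a b, R a ≠ R b)
    (hε : ε ∈ Set.Ioo (0 : ℝ) 1) (hc : 0 < c) (ht : t0 < t1)
    (hτ1 : c * (t1 - t0) < ε * Rmin R ^ 2)
    (hτ2 : (t1 - t0) * Real.sqrt (supNorm (deriv (deriv (fun t => R t ^ 2)))) <
      2 * Real.sqrt (1 + Real.sqrt (1 - ε ^ 2)) * Rmin R) :
    2 * Afun R c t0 t1 > supNorm (deriv (deriv (fun t => R t ^ 2))) ∧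
    (∀ t : ℝ, deriv (deriv (fun s => dirich R c t0 t1 s ^ 2)) t = 2 * Afun R c t0 t1) ∧
    StrictConcaveOn ℝ (Set.Icc t0 t1) (fun t => R t ^ 2 - dirich R c t0 t1 t ^ 2) ∧
    ∀ t ∈ Set.Ioo t0 t1, 0 < R t ^ 2 - dirich R c t0 t1 t ^ 2 := by
  obtain ⟨hε0, hε1⟩ := hε
  have hτ : 0 < t1 - t0 := sub_pos.mpr ht
  set τ := t1 - t0 with hτdef
  have hRc : Continuous R := hC.continuous
  -- Rmin facts
  have hRbdd : BddBelow (Set.range R) := per_bddBelow hRc hper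
  have hRmin_le : ∀ t, Rmin R ≤ R t := fun t => csInf_le hRbdd ⟨t, rfl⟩
  have hRmin_pos : 0 < Rmin R := by
    have hne : (R '' Set.Icc 0 1).Nonempty := ⟨R 0, 0, by norm_num, rfl⟩
    have hmem : Rmin R ∈ Set.range R := by
      rw [Rmin, per_range_eq hper]
      exact (isCompact_Icc.image hRc).sInf_mem hne
    obtain ⟨x, hx⟩ := hmem
    rw [← hx]; exact hpos x
  -- F := R² and its derivatives
  set F : ℝ → ℝ := fun t => R t ^ 2 with hFdef
  have hF : ContDiff ℝ 2 F := hC.pow 2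
  have hFper : ∀ t, F (t + 1) = F t := fun t => by simp only [hFdef, hper t]
  have hF' : Differentiable ℝ F ∧ ContDiff ℝ 1 (deriv F) := by
    rw [show (2 : WithTop ℕ∞) = 1 + 1 by norm_num, contDiff_succ_iff_deriv] at hF
    exact ⟨hF.1, hF.2.2⟩
  have hdF : Differentiable ℝ F := hF'.1
  have hddF : Differentiable ℝ (deriv F) ∧ Continuous (deriv (deriv F)) :=
    contDiff_one_iff_deriv.mp hF'.2
  set g := deriv (deriv F) with hgdef
  have hgc : Continuous g := hddF.2
  have hdFper : ∀ t, deriv F (t + 1) = deriv F t := by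
    intro t
    have h1 : (fun x => F (x + 1)) = F := funext hFper
    rw [← deriv_comp_add_const (f := F) (a := 1) (x := t), h1]
  have hgper : ∀ t, g (t + 1) = g t := by
    intro t
    have h1 : (fun x => deriv F (x + 1)) = deriv F := funext hdFper
    rw [hgdef, ← deriv_comp_add_const (f := deriv F) (a := 1) (x := t), h1]
  set M := supNorm g with hMdef
  have habs : BddAbove (Set.range fun t => |g t|) :=
    per_bddAbove hgc.abs (fun t => by simp only [hgper t])
  have hM_bound : ∀ t, |g t| ≤ M := fun t => le_csSup habs ⟨t, rfl⟩
  have hM0 : 0 ≤ M := le_trans (abs_nonneg _) (hM_bound 0)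
  -- S and A facts
  set S := Ssq R c t0 t1 with hSdef
  set A := Afun R c t0 t1 with hAdef
  set B := Bfun R c t0 t1 with hBdef
  set s := Real.sqrt (1 - ε ^ 2) with hsdef
  have hs0 : 0 ≤ s := Real.sqrt_nonneg _
  have hεs : 0 ≤ 1 - ε ^ 2 := by nlinarith
  have hs2 : s ^ 2 = 1 - ε ^ 2 := Real.sq_sqrt hεs
  have hR0 := hpos t0
  have hR1 := hpos t1
  have hR0m : Rmin R ^ 2 ≤ R t0 ^ 2 := by nlinarith [hRmin_le t0, hRmin_pos]
  have hR1m : Rmin R ^ 2 ≤ R t1 ^ 2 := by nlinarith [hRmin_le t1, hRmin_pos]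
  have hmin0 : Rmin R ^ 2 ≤ R t0 * R t1 := by nlinarith [hRmin_le t0, hRmin_le t1, hRmin_pos]
  have hin : c ^ 2 * τ ^ 2 < ε ^ 2 * Rmin R ^ 4 := by nlinarith [hτ1, mul_pos hc hτ, hε0, hRmin_pos]
  have h4 : Rmin R ^ 4 ≤ R t0 ^ 2 * R t1 ^ 2 := by nlinarith [hmin0, sq_nonneg (Rmin R)]
  have hinner_lb : (1 - ε ^ 2) * Rmin R ^ 4 < R t0 ^ 2 * R t1 ^ 2 - c ^ 2 * τ ^ 2 := by
    nlinarith [hin, h4]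
  have hinner_pos : 0 < R t0 ^ 2 * R t1 ^ 2 - c ^ 2 * τ ^ 2 :=
    lt_of_le_of_lt (by positivity) hinner_lb
  have hS2 : S ^ 2 = R t0 ^ 2 * R t1 ^ 2 - c ^ 2 * τ ^ 2 := by
    rw [hSdef, Ssq, ← hτdef]; exact Real.sq_sqrt hinner_pos.le
  have hS_pos : 0 < S := by
    rw [hSdef, Ssq, ← hτdef]; exact Real.sqrt_pos.mpr hinner_pos
  have hS_lb : Rmin R ^ 2 * s ≤ S := by
    rw [hSdef, Ssq, ← hτdef]
    rw [show Rmin R ^ 2 * s = Real.sqrt ((Rmin R ^ 2) ^ 2 * (1 - ε ^ 2)) by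
      rw [Real.sqrt_mul (sq_nonneg _), Real.sqrt_sq (sq_nonneg _)]]
    apply Real.sqrt_le_sqrt
    nlinarith [hinner_lb]
  have hτA : τ ^ 2 * A = R t0 ^ 2 + R t1 ^ 2 + 2 * S := by
    rw [hAdef, Afun, ← hSdef, ← hτdef]
    field_simp
  have hA_pos : 0 < A := by
    have hnum : 0 < R t0 ^ 2 + R t1 ^ 2 + 2 * S := by positivity
    nlinarith [hτA, sq_nonneg τ, hτ]
  have hA_ne : A ≠ 0 := hA_pos.ne'
  -- part 1
  have hτ2' : τ ^ 2 * M < 4 * (1 + s) * Rmin R ^ 2 := by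
    have ha : 0 ≤ τ * Real.sqrt M := mul_nonneg hτ.le (Real.sqrt_nonneg M)
    have h := pow_lt_pow_left₀ hτ2 ha two_ne_zero
    calc τ ^ 2 * M = (τ * Real.sqrt M) ^ 2 := by rw [mul_pow, Real.sq_sqrt hM0]
      _ < (2 * Real.sqrt (1 + s) * Rmin R) ^ 2 := h
      _ = 4 * (1 + s) * Rmin R ^ 2 := by
          rw [mul_pow, mul_pow, Real.sq_sqrt (by linarith : (0:ℝ) ≤ 1 + s)]; ring
  have goal1 : M < 2 * A := by
    have hstep : τ ^ 2 * M < τ ^ 2 * (2 * A) := by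
      have h1 : 4 * (1 + s) * Rmin R ^ 2 ≤ τ ^ 2 * (2 * A) := by
        nlinarith [hτA, hS_lb, hR0m, hR1m]
      linarith
    exact lt_of_mul_lt_mul_left hstep (by positivity)
  -- the quadratic q
  have hq : ∀ t, dirich R c t0 t1 t ^ 2 = A * (t + B) ^ 2 + c ^ 2 / A := by
    intro t
    rw [dirich, ← hAdef, ← hBdef,
      Real.sq_sqrt (div_nonneg (by positivity) hA_pos.le)]
    field_simp
  set q : ℝ → ℝ := fun t => A * (t + B) ^ 2 + c ^ 2 / A with hqdef
  have hdq : ∀ t : ℝ, HasDerivAt q (2 * A * t + 2 * A * B) t := by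
    intro t
    have h1 := ((((hasDerivAt_id t).add_const B).pow 2).const_mul A).add_const (c ^ 2 / A)
    refine h1.congr_deriv ?_
    simp only [id_eq]
    push_cast
    ring
  have hdq' : ∀ t : ℝ, HasDerivAt (fun x : ℝ => 2 * A * x + 2 * A * B) (2 * A) t := by
    intro t
    have h1 := ((hasDerivAt_id t).const_mul (2 * A)).add_const (2 * A * B)
    refine h1.congr_deriv ?_
    ring
  have hqd : deriv q = fun t => 2 * A * t + 2 * A * B := funext fun t => (hdq t).deriv
  have goal2 : ∀ t : ℝ, deriv (deriv (fun s => dirich R c t0 t1 s ^ 2)) t = 2 * A := by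
    intro t
    have h1 : (fun s => dirich R c t0 t1 s ^ 2) = q := funext hq
    rw [h1, hqd]
    exact (hdq' t).deriv
  -- second derivative of F - q
  have hderiv1 : deriv (fun t => F t - q t) = fun t => deriv F t - (2 * A * t + 2 * A * B) := by
    funext t
    rw [deriv_fun_sub (hdF t) (hdq t).differentiableAt, (hdq t).deriv]
  have hderiv2 : ∀ t, deriv (deriv (fun t => F t - q t)) t = g t - 2 * A := by
    intro t
    rw [hderiv1, deriv_fun_sub (hddF.1 t) (hdq' t).differentiableAt, (hdq' t).deriv, hgdef]
  have hqcont : Continuous q := by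
    rw [hqdef]; continuity
  have goal3 : StrictConcaveOn ℝ (Set.Icc t0 t1) (fun t => R t ^ 2 - dirich R c t0 t1 t ^ 2) := by
    have hfeq : (fun t => R t ^ 2 - dirich R c t0 t1 t ^ 2) = fun t => F t - q t :=
      funext fun t => by rw [hq t]
    rw [hfeq]
    apply strictConcaveOn_of_deriv2_neg (convex_Icc t0 t1)
      ((hF.continuous.sub hqcont).continuousOn)
    intro x _
    have hit : deriv^[2] (F - q) x = deriv (deriv (fun t => F t - q t)) x := rfl
    rw [hit, hderiv2 x]
    have hb := abs_le.mp (hM_bound x)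
    linarith [goal1, hb.2]
  -- endpoint values
  have ht0B : t0 + B = -((R t0 ^ 2 + S) / (τ * A)) := by
    rw [hBdef, Bfun, ← hSdef, ← hAdef, ← hτdef]; ring
  have ht1B : t1 + B = (R t1 ^ 2 + S) / (τ * A) := by
    have h' : t1 = t0 + τ := by rw [hτdef]; ring
    conv_lhs => rw [h']
    rw [hBdef, Bfun, ← hSdef, ← hAdef, ← hτdef]
    field_simp
    linear_combination hτA
  have key0 : (R t0 ^ 2 + S) ^ 2 + c ^ 2 * τ ^ 2 = R t0 ^ 2 * (τ ^ 2 * A) := by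
    rw [hτA]; linear_combination hS2
  have key1 : (R t1 ^ 2 + S) ^ 2 + c ^ 2 * τ ^ 2 = R t1 ^ 2 * (τ ^ 2 * A) := by
    rw [hτA]; linear_combination hS2
  have hq0 : q t0 = R t0 ^ 2 := by
    show A * (t0 + B) ^ 2 + c ^ 2 / A = R t0 ^ 2
    rw [ht0B]
    field_simp
    linear_combination key0
  have hq1 : q t1 = R t1 ^ 2 := by
    show A * (t1 + B) ^ 2 + c ^ 2 / A = R t1 ^ 2
    rw [ht1B]
    field_simp
    linear_combination key1
  refine ⟨goal1, goal2, goal3, ?_⟩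
  intro t htt
  obtain ⟨h0, h1⟩ := htt
  have ha : 0 < (t1 - t) / τ := div_pos (by linarith) hτ
  have hb : 0 < (t - t0) / τ := div_pos (by linarith) hτ
  have hab : (t1 - t) / τ + (t - t0) / τ = 1 := by
    field_simp
    linarith
  have hcomb : ((t1 - t) / τ) • t0 + ((t - t0) / τ) • t1 = t := by
    simp only [smul_eq_mul]
    field_simp
    ring
  have hlt := goal3.2 (Set.left_mem_Icc.mpr ht.le) (Set.right_mem_Icc.mpr ht.le) ht.ne ha hb hab
  rw [hcomb] at hlt
  have hf0 : R t0 ^ 2 - dirich R c t0 t1 t0 ^ 2 = 0 := by rw [hq t0]; rw [← hq0]; ring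
  have hf1 : R t1 ^ 2 - dirich R c t0 t1 t1 ^ 2 = 0 := by rw [hq t1]; rw [← hq1]; ring
  simp only [smul_eq_mul, hf0, hf1, mul_zero, add_zero] at hlt
  exact hlt
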